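/- arXiv:2108.12136 — 2 statements merged into one kernel-verified Lean document; each statement's English description precedes it below -/
import Mathlib

section
/- Suppose V(s(t)) is nonincreasing along a trajectory, V(s(0)) < ∞, and for all t, ∫₀ᵗ G(τ)dτ ≥ V(s(t)) - V(s(0)) with G(τ) ≤ 0, where G(τ) = L(x*, λ(τ), μ(τ), ω*, ν*) - L(x(τ), λ*, μ*, ω(τ), ν(τ)). Then the ergodic averages satisfy 0 ≤ L(x̂, λ*, μ*, ω̂, ν̂) - L(x*, λ̂, μ̂, ω*, ν*) ≤ V(s(0))/t. -/
/-!
The gap `L(û, d*) - L(u*, d̂)` is nonnegative because `(u*, d*)` is a saddle point. By Jensen's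
inequality (convexity in the primal variables, concavity in the dual ones) it is at most the time
average of the gap along the trajectory, that is `-(1/t) ∫₀ᵗ G ≤ (W 0 - W t)/t ≤ W 0 / t`.
-/

open MeasureTheory Set
open scoped Interval

section IntervalAverage

variable {E F : Type*} [NormedAddCommGroup E] [NormedAddCommGroup F] {f : ℝ → E} {g : ℝ → F}
  {a b : ℝ}

theorem IntervalIntegrable.prodMk (hf : IntervalIntegrable f volume a b)
    (hg : IntervalIntegrable g volume a b) :
    IntervalIntegrable (fun τ => (f τ, g τ)) volume a b :=
  ⟨hf.1.prodMk hg.1, hf.2.prodMk hg.2⟩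

variable [NormedSpace ℝ E]

theorem intervalIntegral.integral_prodMk [NormedSpace ℝ F] [CompleteSpace E] [CompleteSpace F]
    (hf : IntervalIntegrable f volume a b) (hg : IntervalIntegrable g volume a b) :
    ∫ τ in a..b, (f τ, g τ) = (∫ τ in a..b, f τ, ∫ τ in a..b, g τ) := by
  simp only [intervalIntegral, integral_pair hf.1 hg.1, integral_pair hf.2 hg.2, Prod.mk_sub_mk]

variable [FiniteDimensional ℝ E] {φ : E → ℝ}

-- A convex function on a whole finite-dimensional space is continuous, as Jensen requires.
theorem ConvexOn.map_interval_average_le (hφ : ConvexOn ℝ univ φ) (hab : a ≠ b)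
    (hf : IntervalIntegrable f volume a b) (hφf : IntervalIntegrable (fun τ => φ (f τ)) volume a b) :
    φ ((b - a)⁻¹ • ∫ τ in a..b, f τ) ≤ (b - a)⁻¹ * ∫ τ in a..b, φ (f τ) := by
  have hvol : volume (Ι a b) ≠ 0 := by
    simpa [Real.volume_uIoc, sub_eq_zero] using hab.symm
  have := hφ.map_set_average_le (hφ.continuousOn isOpen_univ) isClosed_univ hvol
    (by simp [Real.volume_uIoc]) (Filter.Eventually.of_forall fun _ => mem_univ _)
    (intervalIntegrable_iff.mp hf) (intervalIntegrable_iff.mp hφf)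
  simpa only [interval_average_eq, smul_eq_mul] using this

theorem ConcaveOn.le_map_interval_average (hφ : ConcaveOn ℝ univ φ) (hab : a ≠ b)
    (hf : IntervalIntegrable f volume a b) (hφf : IntervalIntegrable (fun τ => φ (f τ)) volume a b) :
    (b - a)⁻¹ * ∫ τ in a..b, φ (f τ) ≤ φ ((b - a)⁻¹ • ∫ τ in a..b, f τ) := by
  simpa only [Pi.neg_apply, intervalIntegral.integral_neg, mul_neg, neg_le_neg_iff] using
    hφ.neg.map_interval_average_le hab hf hφf.neg

end IntervalAverage

theorem gap_at_interval_average_le {E F : Type*} [NormedAddCommGroup E] [NormedSpace ℝ E]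
    [FiniteDimensional ℝ E] [NormedAddCommGroup F] [NormedSpace ℝ F] [FiniteDimensional ℝ F]
    (L : E → F → ℝ) (us : E) (ds : F) (hconv : ConvexOn ℝ univ (fun u => L u ds))
    (hconc : ConcaveOn ℝ univ (L us)) {u : ℝ → E} {d : ℝ → F} {a b : ℝ} (hab : a ≠ b)
    (hu : IntervalIntegrable u volume a b) (hd : IntervalIntegrable d volume a b)
    (hLu : IntervalIntegrable (fun τ => L (u τ) ds) volume a b)
    (hLd : IntervalIntegrable (fun τ => L us (d τ)) volume a b) :
    L ((b - a)⁻¹ • ∫ τ in a..b, u τ) ds - L us ((b - a)⁻¹ • ∫ τ in a..b, d τ) ≤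
      (b - a)⁻¹ * ∫ τ in a..b, (L (u τ) ds - L us (d τ)) := by
  rw [intervalIntegral.integral_sub hLu hLd, mul_sub]
  exact sub_le_sub (hconv.map_interval_average_le hab hu hLu)
    (hconc.le_map_interval_average hab hd hLd)

theorem ergodic_rate_O_one_over_t_general
    {n p q w v : ℕ}
    (L : ((Fin n → ℝ) × (Fin w → ℝ) × (Fin v → ℝ)) → ((Fin p → ℝ) × (Fin q → ℝ)) → ℝ)
    (hconv : ∀ d, ConvexOn ℝ Set.univ (fun u => L u d))
    (hconc : ∀ u, ConcaveOn ℝ Set.univ (L u))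
    (xs : Fin n → ℝ) (ws : Fin w → ℝ) (vs : Fin v → ℝ)
    (ls : Fin p → ℝ) (ms : Fin q → ℝ)
    (hsaddle : ∀ u d, L (xs, ws, vs) d ≤ L (xs, ws, vs) (ls, ms) ∧
      L (xs, ws, vs) (ls, ms) ≤ L u (ls, ms))
    (x : ℝ → (Fin n → ℝ)) (ω : ℝ → (Fin w → ℝ)) (ν : ℝ → (Fin v → ℝ))
    (lam : ℝ → (Fin p → ℝ)) (mu : ℝ → (Fin q → ℝ))
    (t : ℝ) (ht : 0 < t)
    (G : ℝ → ℝ)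
    (hG : ∀ τ, G τ = L (xs, ws, vs) (lam τ, mu τ) - L (x τ, ω τ, ν τ) (ls, ms))
    (W : ℝ → ℝ) (hWnonneg : ∀ τ, 0 ≤ W τ)
    (hint : W t - W 0 ≤ ∫ τ in (0:ℝ)..t, G τ)
    (hxint : IntervalIntegrable x volume 0 t) (hωint : IntervalIntegrable ω volume 0 t)
    (hνint : IntervalIntegrable ν volume 0 t)
    (hlamint : IntervalIntegrable lam volume 0 t)
    (hmuint : IntervalIntegrable mu volume 0 t)
    (hint1 : IntervalIntegrable (fun τ => L (xs, ws, vs) (lam τ, mu τ)) volume 0 t)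
    (hint2 : IntervalIntegrable (fun τ => L (x τ, ω τ, ν τ) (ls, ms)) volume 0 t)
    (xhat : Fin n → ℝ) (hxhat : xhat = (1 / t) • ∫ τ in (0:ℝ)..t, x τ)
    (ωhat : Fin w → ℝ) (hωhat : ωhat = (1 / t) • ∫ τ in (0:ℝ)..t, ω τ)
    (νhat : Fin v → ℝ) (hνhat : νhat = (1 / t) • ∫ τ in (0:ℝ)..t, ν τ)
    (lhat : Fin p → ℝ) (hlhat : lhat = (1 / t) • ∫ τ in (0:ℝ)..t, lam τ)
    (mhat : Fin q → ℝ) (hmhat : mhat = (1 / t) • ∫ τ in (0:ℝ)..t, mu τ) :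
    0 ≤ L (xhat, ωhat, νhat) (ls, ms) - L (xs, ws, vs) (lhat, mhat) ∧
      L (xhat, ωhat, νhat) (ls, ms) - L (xs, ws, vs) (lhat, mhat) ≤ W 0 / t := by
  obtain ⟨hdual, hprimal⟩ := hsaddle (xhat, ωhat, νhat) (lhat, mhat)
  refine ⟨by linarith, ?_⟩
  have hgap := gap_at_interval_average_le L (xs, ws, vs) (ls, ms) (hconv (ls, ms))
    (hconc (xs, ws, vs)) ht.ne (hxint.prodMk (hωint.prodMk hνint)) (hlamint.prodMk hmuint)
    hint2 hint1
  have hgap_eq_neg_G : ∫ τ in (0:ℝ)..t, (L (x τ, ω τ, ν τ) (ls, ms) - L (xs, ws, vs) (lam τ, mu τ))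
      = -∫ τ in (0:ℝ)..t, G τ := by
    rw [← intervalIntegral.integral_neg]
    exact intervalIntegral.integral_congr fun τ _ => by simp only [hG, neg_sub]
  rw [intervalIntegral.integral_prodMk hxint (hωint.prodMk hνint),
    intervalIntegral.integral_prodMk hωint hνint, intervalIntegral.integral_prodMk hlamint hmuint,
    hgap_eq_neg_G] at hgap
  simp only [Prod.smul_mk, sub_zero, ← one_div, ← hxhat, ← hωhat, ← hνhat, ← hlhat, ← hmhat] at hgap
  calc _ ≤ 1 / t * -∫ τ in (0:ℝ)..t, G τ := hgap
    _ ≤ 1 / t * W 0 := by gcongr; linarith [hWnonneg t]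
    _ = W 0 / t := by ring

/-- O(1/t) ergodic rate (Theorem 2): if `W t = V(s(t))` is nonnegative with
`∫₀ᵗ G(τ)dτ ≥ W t - W 0` and `G(τ) ≤ 0`, where
`G(τ) = L(xs, λ(τ), μ(τ), ωs, νs) - L(x(τ), λs, μs, ω(τ), ν(τ))`, `L` convex in the
primal variables `(x, ω, ν)`, concave in `(λ, μ)`, and `zs` a saddle point, then the
time averages satisfy `0 ≤ L(x̂, λs, μs, ω̂, ν̂) - L(xs, λ̂, μ̂, ωs, νs) ≤ W 0 / t`. -/
theorem ergodic_rate_O_one_over_t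
    {n p q w v : ℕ}
    (L : ((Fin n → ℝ) × (Fin w → ℝ) × (Fin v → ℝ)) → ((Fin p → ℝ) × (Fin q → ℝ)) → ℝ)
    (hconv : ∀ d, ConvexOn ℝ Set.univ (fun u => L u d))
    (hconc : ∀ u, ConcaveOn ℝ Set.univ (L u))
    (xs : Fin n → ℝ) (ws : Fin w → ℝ) (vs : Fin v → ℝ)
    (ls : Fin p → ℝ) (ms : Fin q → ℝ)
    (hsaddle : ∀ u d, L (xs, ws, vs) d ≤ L (xs, ws, vs) (ls, ms) ∧
      L (xs, ws, vs) (ls, ms) ≤ L u (ls, ms))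
    (x : ℝ → (Fin n → ℝ)) (ω : ℝ → (Fin w → ℝ)) (ν : ℝ → (Fin v → ℝ))
    (lam : ℝ → (Fin p → ℝ)) (mu : ℝ → (Fin q → ℝ))
    (t : ℝ) (ht : 0 < t)
    (G : ℝ → ℝ)
    (hG : ∀ τ, G τ = L (xs, ws, vs) (lam τ, mu τ) - L (x τ, ω τ, ν τ) (ls, ms))
    (hGnonpos : ∀ τ ∈ Set.Icc 0 t, G τ ≤ 0)
    (W : ℝ → ℝ) (hWnonneg : ∀ τ, 0 ≤ W τ)
    (hWdec : ∀ τ₁ τ₂, 0 ≤ τ₁ → τ₁ ≤ τ₂ → W τ₂ ≤ W τ₁)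
    (hint : W t - W 0 ≤ ∫ τ in (0:ℝ)..t, G τ)
    (hGint : IntervalIntegrable G volume 0 t)
    (hxint : IntervalIntegrable x volume 0 t) (hωint : IntervalIntegrable ω volume 0 t)
    (hνint : IntervalIntegrable ν volume 0 t)
    (hlamint : IntervalIntegrable lam volume 0 t)
    (hmuint : IntervalIntegrable mu volume 0 t)
    (hint1 : IntervalIntegrable (fun τ => L (xs, ws, vs) (lam τ, mu τ)) volume 0 t)
    (hint2 : IntervalIntegrable (fun τ => L (x τ, ω τ, ν τ) (ls, ms)) volume 0 t)
    (xhat : Fin n → ℝ) (hxhat : xhat = (1 / t) • ∫ τ in (0:ℝ)..t, x τ)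
    (ωhat : Fin w → ℝ) (hωhat : ωhat = (1 / t) • ∫ τ in (0:ℝ)..t, ω τ)
    (νhat : Fin v → ℝ) (hνhat : νhat = (1 / t) • ∫ τ in (0:ℝ)..t, ν τ)
    (lhat : Fin p → ℝ) (hlhat : lhat = (1 / t) • ∫ τ in (0:ℝ)..t, lam τ)
    (mhat : Fin q → ℝ) (hmhat : mhat = (1 / t) • ∫ τ in (0:ℝ)..t, mu τ) :
    0 ≤ L (xhat, ωhat, νhat) (ls, ms) - L (xs, ws, vs) (lhat, mhat) ∧
      L (xhat, ωhat, νhat) (ls, ms) - L (xs, ws, vs) (lhat, mhat) ≤ W 0 / t :=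
  ergodic_rate_O_one_over_t_general L hconv hconc xs ws vs ls ms hsaddle x ω ν lam mu t ht G hG W
    hWnonneg hint hxint hωint hνint hlamint hmuint hint1 hint2 xhat hxhat ωhat hωhat νhat hνhat lhat
    hlhat mhat hmhat
end

section
/- Let F(z) be the monotone-like operator built from convex data: F(x,λ,μ,ω,ν) = (∇f(x) + ∂g(x)ᵀλ + Aᵀμ, -g(x) + Lω, -Ax + b + Lν, -Lλ, -Lμ) with f, g convex differentiable and L symmetric positive semidefinite. If z* satisfies -F(z*) ∈ N_Θ(z*) on Θ = Ω × ℝᵖ₊ × ℝ^{p+2q}, then for all z ∈ Θ and η = F(z): ⟪z - z*, η⟫ ≥ L(x, λ*, μ*, ω, ν) - L(x*, λ, μ, ω*, ν*) ≥ 0, where L is the associated Lagrangian. -/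
open scoped RealInnerProductSpace BigOperators

/-!
Writing `z = (x, λ, μ, ω, ν)`, the part of `F` acting on the multipliers `(λ, μ, ω, ν)` is
affine with skew-symmetric linear part (this is where the symmetry of `Lp` and `Lq` enters), so
`⟪z - z*, F z⟫` equals the Lagrangian gap `L(x, λ*, μ*, ω, ν) - L(x*, λ, μ, ω*, ν*)` up to the
first-order convexity defect of `L(·, λ, μ, ω, ν)` between `x` and `x*`. For `λ ≥ 0` this function
is convex with gradient `F₁(x, λ, μ)`, so the defect has a sign: evaluated at `z` it gives the first
inequality, evaluated at `z*` and combined with the variational inequality it gives the second.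
-/

theorem ConvexOn.le_sub_of_hasFDerivAt {E : Type*} [NormedAddCommGroup E] [NormedSpace ℝ E]
    {s : Set E} {f : E → ℝ} {f' : StrongDual ℝ E} {x y : E} (hf : ConvexOn ℝ s f)
    (hf' : HasFDerivAt f f' x) (hx : x ∈ s) (hy : y ∈ s) :
    f' (y - x) ≤ f y - f x := by
  have hline : HasDerivAt (f ∘ AffineMap.lineMap (k := ℝ) x y) (f' (y - x)) 0 := by
    refine HasFDerivAt.comp_hasDerivAt (0 : ℝ) ?_ AffineMap.hasDerivAt_lineMap
    rwa [AffineMap.lineMap_apply_zero]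
  have := (hf.comp_affineMap (AffineMap.lineMap x y)).le_slope_of_hasDerivAt
    (x := 0) (y := 1) (by simpa) (by simpa) zero_lt_one hline
  simpa [slope] using this

theorem ConvexOn.inner_gradient_le_sub {E : Type*} [NormedAddCommGroup E]
    [InnerProductSpace ℝ E] [CompleteSpace E] {s : Set E} {f : E → ℝ} {x y : E}
    (hf : ConvexOn ℝ s f) (hdf : DifferentiableAt ℝ f x) (hx : x ∈ s) (hy : y ∈ s) :
    ⟪gradient f x, y - x⟫ ≤ f y - f x :=
  hf.le_sub_of_hasFDerivAt hdf.hasGradientAt.hasFDerivAt hx hy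

section Lagrangian

variable {E P Q : Type*} [NormedAddCommGroup E] [InnerProductSpace ℝ E]
  [NormedAddCommGroup P] [InnerProductSpace ℝ P] [NormedAddCommGroup Q] [InnerProductSpace ℝ Q]

def lagrangian (f : E → ℝ) (gv : E → P) (A : E →ₗ[ℝ] Q) (b : Q) (Lp : P →ₗ[ℝ] P)
    (Lq : Q →ₗ[ℝ] Q) (x : E) (lam : P) (μ : Q) (ω : P) (ν : Q) : ℝ :=
  f x + ⟪lam, gv x - Lp ω⟫ + ⟪μ, A x - b - Lq ν⟫

/-- `G` plays the role of the `x`-component of `F (x, λ, μ, ω, ν)`; the last bracket is the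
first-order convexity defect of `lagrangian … · λ μ ω ν` at `x` in the direction of `xs`. -/
theorem inner_saddle_operator_eq (f : E → ℝ) (gv : E → P) (A : E →ₗ[ℝ] Q) (b : Q)
    {Lp : P →ₗ[ℝ] P} {Lq : Q →ₗ[ℝ] Q} (hLp : Lp.IsSymmetric) (hLq : Lq.IsSymmetric)
    (G x xs : E) (lam lams : P) (μ μs : Q) (ω ωs : P) (ν νs : Q) :
    ⟪x - xs, G⟫ + ⟪lam - lams, -gv x + Lp ω⟫ + ⟪μ - μs, -A x + b + Lq ν⟫
        + ⟪ω - ωs, -Lp lam⟫ + ⟪ν - νs, -Lq μ⟫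
      = lagrangian f gv A b Lp Lq x lams μs ω ν - lagrangian f gv A b Lp Lq xs lam μ ωs νs
        - (⟪G, xs - x⟫ - (lagrangian f gv A b Lp Lq xs lam μ ω ν
          - lagrangian f gv A b Lp Lq x lam μ ω ν)) := by
  have hLp' (u v : P) : ⟪u, Lp v⟫ = ⟪v, Lp u⟫ := by rw [← hLp, real_inner_comm]
  have hLq' (u v : Q) : ⟪u, Lq v⟫ = ⟪v, Lq u⟫ := by rw [← hLq, real_inner_comm]
  simp only [lagrangian, inner_add_right, inner_sub_left, inner_sub_right, inner_neg_right,
    real_inner_comm _ G]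
  rw [hLp' ω, hLp' ωs, hLq' ν, hLq' νs]
  ring

theorem inner_gradient_lagrangian_le {ι : Type*} [Fintype ι] [FiniteDimensional ℝ E]
    [FiniteDimensional ℝ Q] {s : Set E} {f : E → ℝ} {g : ι → E → ℝ}
    {gv : E → EuclideanSpace ℝ ι} (hgv : ∀ x k, gv x k = g k x) (A : E →ₗ[ℝ] Q) (b : Q)
    (Lp : EuclideanSpace ℝ ι →ₗ[ℝ] EuclideanSpace ℝ ι) (Lq : Q →ₗ[ℝ] Q)
    {x y : E} {lam : EuclideanSpace ℝ ι} (μ : Q) (ω : EuclideanSpace ℝ ι) (ν : Q)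
    (hf : ConvexOn ℝ s f) (hg : ∀ k, ConvexOn ℝ s (g k)) (hdf : DifferentiableAt ℝ f x)
    (hdg : ∀ k, DifferentiableAt ℝ (g k) x) (hlam : ∀ k, 0 ≤ lam k) (hx : x ∈ s) (hy : y ∈ s) :
    ⟪gradient f x + ∑ k, lam k • gradient (g k) x + LinearMap.adjoint A μ, y - x⟫
      ≤ lagrangian f gv A b Lp Lq y lam μ ω ν - lagrangian f gv A b Lp Lq x lam μ ω ν := by
  have hgrad_f := hf.inner_gradient_le_sub hdf hx hy
  have hgrad_g : ⟪∑ k, lam k • gradient (g k) x, y - x⟫ ≤ ⟪lam, gv y - gv x⟫ := by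
    simp only [sum_inner, real_inner_smul_left, PiLp.inner_apply, PiLp.sub_apply, hgv,
      RCLike.inner_apply, conj_trivial]
    refine Finset.sum_le_sum fun k _ => ?_
    rw [mul_comm _ (lam k)]
    exact mul_le_mul_of_nonneg_left ((hg k).inner_gradient_le_sub (hdg k) hx hy) (hlam k)
  simp only [lagrangian, inner_add_left, LinearMap.adjoint_inner_left, inner_sub_right]
    at hgrad_f hgrad_g ⊢
  linarith

end Lagrangian

theorem operator_saddle_inequality_general
    {n p q : ℕ}
    (Ω : Set (EuclideanSpace ℝ (Fin n)))
    (f : EuclideanSpace ℝ (Fin n) → ℝ)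
    (hfdiff : Differentiable ℝ f) (hfconv : ConvexOn ℝ Ω f)
    (g : Fin p → EuclideanSpace ℝ (Fin n) → ℝ)
    (hgdiff : ∀ k, Differentiable ℝ (g k)) (hgconv : ∀ k, ConvexOn ℝ Ω (g k))
    (gv : EuclideanSpace ℝ (Fin n) → EuclideanSpace ℝ (Fin p))
    (hgv : ∀ x k, gv x k = g k x)
    (A : EuclideanSpace ℝ (Fin n) →ₗ[ℝ] EuclideanSpace ℝ (Fin q))
    (b : EuclideanSpace ℝ (Fin q))
    (Lp : EuclideanSpace ℝ (Fin p) →ₗ[ℝ] EuclideanSpace ℝ (Fin p))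
    (Lq : EuclideanSpace ℝ (Fin q) →ₗ[ℝ] EuclideanSpace ℝ (Fin q))
    (hLpsymm : ∀ u v, ⟪Lp u, v⟫ = ⟪u, Lp v⟫)
    (hLqsymm : ∀ u v, ⟪Lq u, v⟫ = ⟪u, Lq v⟫)
    -- the Lagrangian
    (Lag : EuclideanSpace ℝ (Fin n) → EuclideanSpace ℝ (Fin p) →
      EuclideanSpace ℝ (Fin q) → EuclideanSpace ℝ (Fin p) →
      EuclideanSpace ℝ (Fin q) → ℝ)
    (hLag : ∀ x lam μ ω ν, Lag x lam μ ω ν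
      = f x + ⟪lam, gv x - Lp ω⟫ + ⟪μ, A x - b - Lq ν⟫)
    -- the five components of the operator F
    (F1 : EuclideanSpace ℝ (Fin n) → EuclideanSpace ℝ (Fin p) →
      EuclideanSpace ℝ (Fin q) → EuclideanSpace ℝ (Fin n))
    (hF1 : ∀ x lam μ, F1 x lam μ
      = gradient f x + ∑ k, lam k • gradient (g k) x + (LinearMap.adjoint A) μ)
    (F2 : EuclideanSpace ℝ (Fin n) → EuclideanSpace ℝ (Fin p) →
      EuclideanSpace ℝ (Fin p))
    (hF2 : ∀ x ω, F2 x ω = -gv x + Lp ω)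
    (F3 : EuclideanSpace ℝ (Fin n) → EuclideanSpace ℝ (Fin q) →
      EuclideanSpace ℝ (Fin q))
    (hF3 : ∀ x ν, F3 x ν = -(A x) + b + Lq ν)
    -- the saddle point z* ∈ Θ
    (xs : EuclideanSpace ℝ (Fin n)) (lams ωs : EuclideanSpace ℝ (Fin p))
    (μs νs : EuclideanSpace ℝ (Fin q))
    (hxs : xs ∈ Ω) (hlams : ∀ k, 0 ≤ lams k)
    -- the normal-cone condition -F(z*) ∈ N_Θ(z*)
    (hVI : ∀ x ∈ Ω, ∀ lam : EuclideanSpace ℝ (Fin p), (∀ k, 0 ≤ lam k) →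
      ∀ (μ : EuclideanSpace ℝ (Fin q)) (ω : EuclideanSpace ℝ (Fin p))
        (ν : EuclideanSpace ℝ (Fin q)),
      0 ≤ ⟪F1 xs lams μs, x - xs⟫ + ⟪F2 xs ωs, lam - lams⟫
        + ⟪F3 xs νs, μ - μs⟫ + ⟪-Lp lams, ω - ωs⟫ + ⟪-Lq μs, ν - νs⟫) :
    ∀ x ∈ Ω, ∀ lam : EuclideanSpace ℝ (Fin p), (∀ k, 0 ≤ lam k) →
      ∀ (μ : EuclideanSpace ℝ (Fin q)) (ω : EuclideanSpace ℝ (Fin p))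
        (ν : EuclideanSpace ℝ (Fin q)),
      Lag x lams μs ω ν - Lag xs lam μ ωs νs
        ≤ ⟪x - xs, F1 x lam μ⟫ + ⟪lam - lams, F2 x ω⟫ + ⟪μ - μs, F3 x ν⟫
          + ⟪ω - ωs, -Lp lam⟫ + ⟪ν - νs, -Lq μ⟫ ∧
      0 ≤ Lag x lams μs ω ν - Lag xs lam μ ωs νs := by
  intro x hx lam hlam μ ω ν
  obtain rfl : Lag = lagrangian f gv A b Lp Lq := by
    funext x lam μ ω ν
    exact hLag x lam μ ω ν
  have hgap := inner_gradient_lagrangian_le hgv A b Lp Lq μ ω ν hfconv hgconv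
    (hfdiff x) (fun k => hgdiff k x) hlam hx hxs
  have hgap_star := inner_gradient_lagrangian_le hgv A b Lp Lq μs ωs νs hfconv hgconv
    (hfdiff xs) (fun k => hgdiff k xs) hlams hxs hx
  rw [← hF1] at hgap hgap_star
  have hid := inner_saddle_operator_eq f gv A b hLpsymm hLqsymm (F1 x lam μ)
    x xs lam lams μ μs ω ωs ν νs
  have hid_star := inner_saddle_operator_eq f gv A b hLpsymm hLqsymm (F1 xs lams μs)
    xs x lams lam μs μ ωs ω νs ν
  have hvi := hVI x hx lam hlam μ ω ν
  simp only [hF2, hF3] at hvi hid hid_star ⊢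
  -- `hid_star` pairs `F z*` with `z* - z`, `hvi` with `z - z*`: normalize both to the same atoms
  simp only [inner_add_left, inner_add_right, inner_sub_left, inner_sub_right, inner_neg_left,
    inner_neg_right, real_inner_comm] at hvi hid_star hgap_star
  constructor <;> linarith

/-- Inequality (16) (smooth single-agent version): for the operator
`F(x,λ,μ,ω,ν) = (∇f(x) + ∑ₖ λₖ∇gₖ(x) + Aᵀμ, -g(x) + Lpω, -Ax + b + Lqν, -Lpλ, -Lqμ)`
built from convex data, if `z* ∈ Θ = Ω × ℝᵖ₊ × ℝ^{p+2q}` satisfies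
`-F(z*) ∈ N_Θ(z*)`, then for every `z ∈ Θ`,
`⟪z - z*, F(z)⟫ ≥ L(x,λ*,μ*,ω,ν) - L(x*,λ,μ,ω*,ν*) ≥ 0`, where
`L(x,λ,μ,ω,ν) = f(x) + ⟪λ, g(x) - Lpω⟫ + ⟪μ, Ax - b - Lqν⟫`. -/
theorem operator_saddle_inequality
    {n p q : ℕ}
    (Ω : Set (EuclideanSpace ℝ (Fin n)))
    (hconvΩ : Convex ℝ Ω) (hclosed : IsClosed Ω)
    (f : EuclideanSpace ℝ (Fin n) → ℝ)
    (hfdiff : Differentiable ℝ f) (hfconv : ConvexOn ℝ Ω f)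
    (g : Fin p → EuclideanSpace ℝ (Fin n) → ℝ)
    (hgdiff : ∀ k, Differentiable ℝ (g k)) (hgconv : ∀ k, ConvexOn ℝ Ω (g k))
    (gv : EuclideanSpace ℝ (Fin n) → EuclideanSpace ℝ (Fin p))
    (hgv : ∀ x k, gv x k = g k x)
    (A : EuclideanSpace ℝ (Fin n) →ₗ[ℝ] EuclideanSpace ℝ (Fin q))
    (b : EuclideanSpace ℝ (Fin q))
    (Lp : EuclideanSpace ℝ (Fin p) →ₗ[ℝ] EuclideanSpace ℝ (Fin p))
    (Lq : EuclideanSpace ℝ (Fin q) →ₗ[ℝ] EuclideanSpace ℝ (Fin q))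
    (hLpsymm : ∀ u v, ⟪Lp u, v⟫ = ⟪u, Lp v⟫) (hLppsd : ∀ v, 0 ≤ ⟪v, Lp v⟫)
    (hLqsymm : ∀ u v, ⟪Lq u, v⟫ = ⟪u, Lq v⟫) (hLqpsd : ∀ v, 0 ≤ ⟪v, Lq v⟫)
    -- the Lagrangian
    (Lag : EuclideanSpace ℝ (Fin n) → EuclideanSpace ℝ (Fin p) →
      EuclideanSpace ℝ (Fin q) → EuclideanSpace ℝ (Fin p) →
      EuclideanSpace ℝ (Fin q) → ℝ)
    (hLag : ∀ x lam μ ω ν, Lag x lam μ ω ν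
      = f x + ⟪lam, gv x - Lp ω⟫ + ⟪μ, A x - b - Lq ν⟫)
    -- the five components of the operator F
    (F1 : EuclideanSpace ℝ (Fin n) → EuclideanSpace ℝ (Fin p) →
      EuclideanSpace ℝ (Fin q) → EuclideanSpace ℝ (Fin n))
    (hF1 : ∀ x lam μ, F1 x lam μ
      = gradient f x + ∑ k, lam k • gradient (g k) x + (LinearMap.adjoint A) μ)
    (F2 : EuclideanSpace ℝ (Fin n) → EuclideanSpace ℝ (Fin p) →
      EuclideanSpace ℝ (Fin p))
    (hF2 : ∀ x ω, F2 x ω = -gv x + Lp ω)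
    (F3 : EuclideanSpace ℝ (Fin n) → EuclideanSpace ℝ (Fin q) →
      EuclideanSpace ℝ (Fin q))
    (hF3 : ∀ x ν, F3 x ν = -(A x) + b + Lq ν)
    -- the saddle point z* ∈ Θ
    (xs : EuclideanSpace ℝ (Fin n)) (lams ωs : EuclideanSpace ℝ (Fin p))
    (μs νs : EuclideanSpace ℝ (Fin q))
    (hxs : xs ∈ Ω) (hlams : ∀ k, 0 ≤ lams k)
    -- the normal-cone condition -F(z*) ∈ N_Θ(z*)
    (hVI : ∀ x ∈ Ω, ∀ lam : EuclideanSpace ℝ (Fin p), (∀ k, 0 ≤ lam k) →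
      ∀ (μ : EuclideanSpace ℝ (Fin q)) (ω : EuclideanSpace ℝ (Fin p))
        (ν : EuclideanSpace ℝ (Fin q)),
      0 ≤ ⟪F1 xs lams μs, x - xs⟫ + ⟪F2 xs ωs, lam - lams⟫
        + ⟪F3 xs νs, μ - μs⟫ + ⟪-Lp lams, ω - ωs⟫ + ⟪-Lq μs, ν - νs⟫) :
    ∀ x ∈ Ω, ∀ lam : EuclideanSpace ℝ (Fin p), (∀ k, 0 ≤ lam k) →
      ∀ (μ : EuclideanSpace ℝ (Fin q)) (ω : EuclideanSpace ℝ (Fin p))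
        (ν : EuclideanSpace ℝ (Fin q)),
      Lag x lams μs ω ν - Lag xs lam μ ωs νs
        ≤ ⟪x - xs, F1 x lam μ⟫ + ⟪lam - lams, F2 x ω⟫ + ⟪μ - μs, F3 x ν⟫
          + ⟪ω - ωs, -Lp lam⟫ + ⟪ν - νs, -Lq μ⟫ ∧
      0 ≤ Lag x lams μs ω ν - Lag xs lam μ ωs νs :=
  operator_saddle_inequality_general Ω f hfdiff hfconv g hgdiff hgconv gv hgv A b Lp Lq hLpsymm
    hLqsymm Lag hLag F1 hF1 F2 hF2 F3 hF3 xs lams ωs μs νs hxs hlams hVI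
end
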